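/- Let R be a root system stable under an involution σ as above, with restricted root system R̄ = {ᾱ = α − σ(α) : α ∈ R, σ(α) ≠ α}. If Θ is the highest root of R (with respect to the basis Δ), then Θ̄ = Θ − σ(Θ) is the highest root of R̄ with respect to the basis Δ̄ = {ᾱ : α ∈ Δ, σ(α) < 0}. -/
import Mathlib


open scoped RealInnerProductSpace

/- Root systems are modeled concretely inside a real inner product space `V`, with
`R` the finite set of roots, `Δ` the simple roots, and `σ` a linear isometric
involution preserving `R`, fixing each simple root or sending it to a negative root.
The restricted root system `R̄` consists of the nonzero vectors `α − σα` and
`Δ̄ = {α − σα : α ∈ Δ, σα ≠ α}` is its basis. -/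

/-- The Cartan pairing `⟨α∨, β⟩ = 2(α,β)/(α,α)`. -/
noncomputable def cpair {V : Type*} [NormedAddCommGroup V] [InnerProductSpace ℝ V]
    (α β : V) : ℝ := 2 * ⟪α, β⟫ / ⟪α, α⟫

/-- `v` is a nonnegative linear combination of the elements of `Δ`. -/
def IsNonnegComb {V : Type*} [NormedAddCommGroup V] [InnerProductSpace ℝ V]
    (Δ : Finset V) (v : V) : Prop :=
  ∃ c : V → ℝ, (∀ β ∈ Δ, 0 ≤ c β) ∧ v = ∑ β ∈ Δ, c β • β

/-- `v` is a nonnegative linear combination of the elements of a set `Δ'`. -/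
def IsNonnegCombSet {V : Type*} [NormedAddCommGroup V] [InnerProductSpace ℝ V]
    (Δ' : Set V) (v : V) : Prop :=
  ∃ (s : Finset V) (c : V → ℝ), ↑s ⊆ Δ' ∧ (∀ β ∈ s, 0 ≤ c β) ∧ v = ∑ β ∈ s, c β • β

/-- If `Θ` is the highest root of `R`, then `Θ̄ = Θ − σ(Θ)` is the
highest root of the restricted root system `R̄` with respect to the basis `Δ̄`. -/
theorem restricted_highest_root
    {V : Type*} [NormedAddCommGroup V] [InnerProductSpace ℝ V]
    (R Δ : Finset V)
    (hΔR : ↑Δ ⊆ (R : Set V))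
    (h0 : (0 : V) ∉ R)
    (hdecomp : ∀ α ∈ R, IsNonnegComb Δ α ∨ IsNonnegComb Δ (-α))
    (hrefl : ∀ α ∈ R, ∀ β ∈ R, β - cpair α β • α ∈ R)
    (hcrys : ∀ α ∈ R, ∀ β ∈ R, ∃ n : ℤ, cpair α β = (n : ℝ))
    (σ : V ≃ₗᵢ[ℝ] V) (hσinv : ∀ v, σ (σ v) = v)
    (hσR : ∀ α ∈ R, σ α ∈ R)
    (hσΔ : ∀ α ∈ Δ, σ α = α ∨ IsNonnegComb Δ (-(σ α)))
    (Θ : V) (hΘ : Θ ∈ R)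
    (hhighest : ∀ α ∈ R, IsNonnegComb Δ (Θ - α))
    (hσΘ : σ Θ ≠ Θ) :
    (Θ - σ Θ) ∈ {v : V | ∃ α ∈ R, σ α ≠ α ∧ v = α - σ α} ∧
    ∀ v ∈ {v : V | ∃ α ∈ R, σ α ≠ α ∧ v = α - σ α},
      IsNonnegCombSet ((fun α => α - σ α) '' {α : V | α ∈ Δ ∧ σ α ≠ α})
        ((Θ - σ Θ) - v) := by
  classical
  refine ⟨⟨Θ, hΘ, hσΘ, rfl⟩, ?_⟩
  rintro v ⟨α, hα, hσα, rfl⟩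
  obtain ⟨c, hc, hsum⟩ := hhighest α hα
  set f : V → V := fun β => β - σ β with hf
  set t := Δ.filter (fun β => σ β ≠ β) with ht
  have key : (Θ - σ Θ) - (α - σ α) = ∑ β ∈ t, c β • f β := by
    have h1 : (Θ - σ Θ) - (α - σ α) = (Θ - α) - σ (Θ - α) := by
      rw [map_sub]; abel
    have h2 : σ (Θ - α) = ∑ β ∈ Δ, c β • σ β := by
      rw [hsum, map_sum]
      exact Finset.sum_congr rfl fun β _ => by rw [map_smul]
    have h3 : (Θ - α) - σ (Θ - α) = ∑ β ∈ Δ, c β • f β := by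
      rw [h2, hsum, ← Finset.sum_sub_distrib]
      exact Finset.sum_congr rfl fun β _ => by rw [← smul_sub]
    rw [h1, h3]
    refine (Finset.sum_subset (Finset.filter_subset _ _) ?_).symm
    intro β hβ hβt
    have : σ β = β := by
      by_contra h
      exact hβt (Finset.mem_filter.mpr ⟨hβ, h⟩)
    simp [hf, this]
  refine ⟨t.image f, fun γ => ∑ β ∈ t.filter (fun β => f β = γ), c β, ?_, ?_, ?_⟩
  · intro γ hγ
    obtain ⟨β, hβ, rfl⟩ := Finset.mem_image.mp hγ
    obtain ⟨hβΔ, hβσ⟩ := Finset.mem_filter.mp hβ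
    exact ⟨β, ⟨hβΔ, hβσ⟩, rfl⟩
  · intro γ _
    refine Finset.sum_nonneg fun β hβ => ?_
    exact hc β (Finset.filter_subset _ _ ((Finset.filter_subset _ _) hβ))
  · rw [key]
    rw [← Finset.sum_fiberwise_of_maps_to (fun β hβ => Finset.mem_image_of_mem f hβ)
      (fun β => c β • f β)]
    refine Finset.sum_congr rfl fun γ _ => ?_
    rw [Finset.sum_smul]
    refine Finset.sum_congr rfl fun β hβ => ?_
    rw [(Finset.mem_filter.mp hβ).2]
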